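/- arXiv:2211.00571 — 3 statements merged into one kernel-verified Lean document; each statement's English description precedes it below -/
import Mathlib

section
/- Let M be a real convex monoid. For all m₁, m₂ ∈ M, the invertible fraction is supermultiplicative: IF(m₁·m₂) ≥ IF(m₁)·IF(m₂). -/
open Finsupp
open scoped Classical NNReal

/-- `p` is a finitely supported distribution: its values sum to `1`. -/
def IsDist {R X : Type*} [CommSemiring R] (p : X →₀ R) : Prop :=
  p.sum (fun _ r => r) = 1

/-- Convolution: `(q ∗ p)(m) = ∑_{g₂·g₁ = m} q(g₂) p(g₁)`. -/
noncomputable def dconv {R M : Type*} [CommSemiring R] [Monoid M]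
    (q p : M →₀ R) : M →₀ R :=
  q.sum fun g₂ b => p.sum fun g₁ a => Finsupp.single (g₂ * g₁) (b * a)

/-- The invertible support of `m`. -/
def Isupp {M : Type*} [Monoid M]
    (pm : (M →₀ ℝ≥0) → M) (m : M) : Set M :=
  {m' | IsUnit m' ∧ ∃ P : M →₀ ℝ≥0, IsDist P ∧ pm P = m ∧ P m' ≠ 0}

/-- `m` is weakly invertible if it is the image under `pm` of a distribution supported
on the units. -/
def WeaklyInv {M : Type*} [Monoid M]
    (pm : (M →₀ ℝ≥0) → M) (m : M) : Prop :=
  ∃ p : M →₀ ℝ≥0, IsDist p ∧ (∀ x ∈ p.support, IsUnit x) ∧ pm p = m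

/-- The total mass a distribution puts on the units of `M`. -/
noncomputable def unitMass {M : Type*} [Monoid M] (P : M →₀ ℝ≥0) : ℝ≥0 :=
  P.sum fun m' r => if IsUnit m' then r else 0

/-- The invertible fraction `IF(m) = sup {∑_{m'∈M*} P(m') : P ∈ D(M), pm(P) = m}`. -/
noncomputable def IF {M : Type*} [Monoid M]
    (pm : (M →₀ ℝ≥0) → M) (m : M) : ℝ≥0 :=
  sSup {s : ℝ≥0 | ∃ P : M →₀ ℝ≥0, IsDist P ∧ pm P = m ∧ s = unitMass P}

/-!
A distribution `Q` over `m₁` and a distribution `P` over `m₂` give the distribution `Q ∗ P`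
over `m₁ · m₂`, because `pm` is multiplicative for convolution. Since units are closed under
multiplication, every pair of units `(g₂, g₁)` contributes its mass `Q(g₂) P(g₁)` to a unit
of `Q ∗ P`, so `unitMass Q * unitMass P ≤ unitMass (Q ∗ P) ≤ IF(m₁ · m₂)`. Taking suprema
over `Q` and `P` gives the claim.
-/

section Convolution

variable {R M N : Type*} [CommSemiring R] [Monoid M] [AddCommMonoid N]

theorem sum_dconv_index (q p : M →₀ R) {f : M → R → N} (hf0 : ∀ m, f m 0 = 0)
    (hfadd : ∀ m a b, f m (a + b) = f m a + f m b) :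
    (dconv q p).sum f = q.sum fun g₂ b => p.sum fun g₁ a => f (g₂ * g₁) (b * a) := by
  unfold dconv
  rw [sum_sum_index hf0 hfadd]
  refine sum_congr fun g₂ _ => ?_
  rw [sum_sum_index hf0 hfadd]
  exact sum_congr fun g₁ _ => sum_single_index (hf0 _)

theorem IsDist.dconv {q p : M →₀ R} (hq : IsDist q) (hp : IsDist p) : IsDist (dconv q p) := by
  unfold IsDist at *
  rw [sum_dconv_index q p (fun _ => rfl) (fun _ _ _ => rfl)]
  simp only [← mul_sum, hp, mul_one, hq]

end Convolution

section UnitMass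

variable {M : Type*} [Monoid M]

theorem IsDist.unitMass_le_one {P : M →₀ ℝ≥0} (hP : IsDist P) : unitMass P ≤ 1 := by
  rw [← hP]
  refine Finset.sum_le_sum fun m _ => ?_
  dsimp only
  split_ifs <;> simp

theorem unitMass_mul_le_unitMass_dconv (Q P : M →₀ ℝ≥0) :
    unitMass Q * unitMass P ≤ unitMass (dconv Q P) := by
  unfold unitMass
  rw [sum_dconv_index Q P (fun _ => by simp) (fun _ _ _ => by split_ifs <;> simp),
    sum_mul]
  refine Finset.sum_le_sum fun g₂ _ => ?_
  dsimp only
  rw [mul_sum]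
  refine Finset.sum_le_sum fun g₁ _ => ?_
  by_cases h₂ : IsUnit g₂
  · by_cases h₁ : IsUnit g₁
    · simp [h₁, h₂, h₂.mul h₁]
    · simp [h₁]
  · simp [h₂]

end UnitMass

section InvertibleFraction

variable {M : Type*} [Monoid M] (pm : (M →₀ ℝ≥0) → M)

theorem IF_eq_iSup (m : M) :
    IF pm m = ⨆ P : {P : M →₀ ℝ≥0 // IsDist P ∧ pm P = m}, unitMass P.1 := by
  rw [IF, ← sSup_range]
  congr 1
  ext s
  exact ⟨fun ⟨P, hP, hm, hs⟩ => ⟨⟨P, hP, hm⟩, hs.symm⟩,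
    fun ⟨⟨P, hP, hm⟩, hs⟩ => ⟨P, hP, hm, hs.symm⟩⟩

theorem unitMass_le_IF {P : M →₀ ℝ≥0} (hP : IsDist P) : unitMass P ≤ IF pm (pm P) := by
  rw [IF_eq_iSup]
  refine le_ciSup (f := fun P' : {P' // IsDist P' ∧ pm P' = pm P} => unitMass P'.1) ?_
    ⟨P, hP, rfl⟩
  exact ⟨1, Set.forall_mem_range.2 fun P' => P'.2.1.unitMass_le_one⟩

end InvertibleFraction

theorem IF_supermultiplicative_general {M : Type*} [Monoid M]
    (pm : (M →₀ ℝ≥0) → M)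
    (hmul : ∀ p q : M →₀ ℝ≥0, IsDist p → IsDist q → pm (dconv q p) = pm q * pm p)
    (m₁ m₂ : M) :
    IF pm m₁ * IF pm m₂ ≤ IF pm (m₁ * m₂) := by
  rw [IF_eq_iSup pm m₁, IF_eq_iSup pm m₂]
  refine NNReal.iSup_mul_le fun ⟨Q, hQ, hQm⟩ => NNReal.mul_iSup_le fun ⟨P, hP, hPm⟩ => ?_
  calc unitMass Q * unitMass P ≤ unitMass (dconv Q P) := unitMass_mul_le_unitMass_dconv Q P
    _ ≤ IF pm (pm (dconv Q P)) := unitMass_le_IF pm (hQ.dconv hP)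
    _ = IF pm (m₁ * m₂) := by rw [hmul P Q hP hQ, hQm, hPm]

/-- In a real convex monoid, the invertible fraction is supermultiplicative:
`IF(m₁·m₂) ≥ IF(m₁)·IF(m₂)`. -/
theorem IF_supermultiplicative {M : Type*} [Monoid M]
    (pm : (M →₀ ℝ≥0) → M)
    (hδ : ∀ m : M, pm (Finsupp.single m 1) = m)
    (hμ : ∀ Q : (M →₀ ℝ≥0) →₀ ℝ≥0, IsDist Q → (∀ p ∈ Q.support, IsDist p) →
      pm (Q.sum fun p r => r • p) = pm (Finsupp.mapDomain pm Q))
    (hmul : ∀ p q : M →₀ ℝ≥0, IsDist p → IsDist q → pm (dconv q p) = pm q * pm p)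
    (m₁ m₂ : M) :
    IF pm m₁ * IF pm m₂ ≤ IF pm (m₁ * m₂) :=
  IF_supermultiplicative_general pm hmul m₁ m₂
end

section
/- Let M be a real convex monoid, n ∈ M invertible, and m ∈ M. Then IF(n·m) = IF(m). -/
open Finsupp
open scoped Classical NNReal

lemma dconv_single_one {M : Type*} [Monoid M] (n : M) (p : M →₀ ℝ≥0) :
    dconv (Finsupp.single n 1) p = Finsupp.mapDomain (fun x => n * x) p := by
  unfold dconv
  rw [Finsupp.sum_single_index]
  · simp [Finsupp.mapDomain, one_mul]
  · simp

lemma isDist_mapDomain {M N : Type*} [Monoid M] [Monoid N] (f : M → N)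
    (p : M →₀ ℝ≥0) (hp : IsDist p) : IsDist (Finsupp.mapDomain f p) := by
  unfold IsDist at *
  rw [Finsupp.sum_mapDomain_index (by simp) (by simp)]
  exact hp

lemma isDist_single_one {M : Type*} [Monoid M] (n : M) :
    IsDist (Finsupp.single n 1 : M →₀ ℝ≥0) := by
  simp [IsDist, Finsupp.sum_single_index]

lemma unitMass_mapDomain_unit {M : Type*} [Monoid M] (u : Mˣ) (p : M →₀ ℝ≥0) :
    unitMass (Finsupp.mapDomain (fun x => (u : M) * x) p) = unitMass p := by
  unfold unitMass
  rw [Finsupp.sum_mapDomain_index (by simp) (by intro a b c; split <;> simp)]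
  simp [Units.isUnit_units_mul]

lemma IF_set_step {M : Type*} [Monoid M]
    (pm : (M →₀ ℝ≥0) → M)
    (hδ : ∀ m : M, pm (Finsupp.single m 1) = m)
    (hmul : ∀ p q : M →₀ ℝ≥0, IsDist p → IsDist q → pm (dconv q p) = pm q * pm p)
    (u : Mˣ) (m : M) (s : ℝ≥0)
    (hs : s ∈ {s : ℝ≥0 | ∃ P : M →₀ ℝ≥0, IsDist P ∧ pm P = m ∧ s = unitMass P}) :
    s ∈ {s : ℝ≥0 | ∃ P : M →₀ ℝ≥0, IsDist P ∧ pm P = (u : M) * m ∧ s = unitMass P} := by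
  obtain ⟨P, hP, hPm, hsP⟩ := hs
  refine ⟨dconv (Finsupp.single (u : M) 1) P, ?_, ?_, ?_⟩
  · rw [dconv_single_one]; exact isDist_mapDomain _ _ hP
  · rw [hmul _ _ hP (isDist_single_one _), hδ, hPm]
  · rw [dconv_single_one, unitMass_mapDomain_unit u P, hsP]

/-- In a real convex monoid, multiplying by an invertible element does not change the
invertible fraction: `IF(n·m) = IF(m)`. -/
theorem IF_unit_mul {M : Type*} [Monoid M]
    (pm : (M →₀ ℝ≥0) → M)
    (hδ : ∀ m : M, pm (Finsupp.single m 1) = m)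
    (hμ : ∀ Q : (M →₀ ℝ≥0) →₀ ℝ≥0, IsDist Q → (∀ p ∈ Q.support, IsDist p) →
      pm (Q.sum fun p r => r • p) = pm (Finsupp.mapDomain pm Q))
    (hmul : ∀ p q : M →₀ ℝ≥0, IsDist p → IsDist q → pm (dconv q p) = pm q * pm p)
    (n m : M) (hn : IsUnit n) :
    IF pm (n * m) = IF pm m := by
  lift n to Mˣ using hn
  unfold IF
  congr 1
  apply Set.Subset.antisymm
  · intro s hs
    obtain ⟨P, hP, hPm, hsP⟩ := hs
    have := IF_set_step pm hδ hmul n⁻¹ (↑n * m) s ⟨P, hP, hPm, hsP⟩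
    simpa [← mul_assoc] using this
  · exact fun s hs => IF_set_step pm hδ hmul n m s hs
end

section
/- Let f : M₁ → M₂ be a morphism of real convex monoids. Then for every m ∈ M₁, IF(f(m)) ≥ IF(m). -/
open Finsupp
open scoped Classical NNReal

/-- For a morphism `f : M₁ → M₂` of real convex monoids, `IF(f(m)) ≥ IF(m)`. -/
theorem IF_le_IF_map {M₁ M₂ : Type*} [Monoid M₁] [Monoid M₂]
    (pm₁ : (M₁ →₀ ℝ≥0) → M₁) (pm₂ : (M₂ →₀ ℝ≥0) → M₂)
    (hδ₁ : ∀ m : M₁, pm₁ (Finsupp.single m 1) = m)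
    (hμ₁ : ∀ Q : (M₁ →₀ ℝ≥0) →₀ ℝ≥0, IsDist Q → (∀ p ∈ Q.support, IsDist p) →
      pm₁ (Q.sum fun p r => r • p) = pm₁ (Finsupp.mapDomain pm₁ Q))
    (hmul₁ : ∀ p q : M₁ →₀ ℝ≥0, IsDist p → IsDist q → pm₁ (dconv q p) = pm₁ q * pm₁ p)
    (hδ₂ : ∀ m : M₂, pm₂ (Finsupp.single m 1) = m)
    (hμ₂ : ∀ Q : (M₂ →₀ ℝ≥0) →₀ ℝ≥0, IsDist Q → (∀ p ∈ Q.support, IsDist p) →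
      pm₂ (Q.sum fun p r => r • p) = pm₂ (Finsupp.mapDomain pm₂ Q))
    (hmul₂ : ∀ p q : M₂ →₀ ℝ≥0, IsDist p → IsDist q → pm₂ (dconv q p) = pm₂ q * pm₂ p)
    (f : M₁ →* M₂)
    (hf : ∀ p : M₁ →₀ ℝ≥0, IsDist p → pm₂ (Finsupp.mapDomain (⇑f) p) = f (pm₁ p))
    (m : M₁) :
    IF pm₁ m ≤ IF pm₂ (f m) := by
  have hb : BddAbove {s : ℝ≥0 | ∃ P : M₂ →₀ ℝ≥0, IsDist P ∧ pm₂ P = f m ∧ s = unitMass P} := by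
    refine ⟨1, ?_⟩
    rintro s ⟨P, hP, _, rfl⟩
    calc unitMass P ≤ P.sum fun _ r => r := by
          apply Finset.sum_le_sum
          intro i _
          dsimp only
          split <;> simp
      _ = 1 := hP
  apply csSup_le
  · exact ⟨unitMass (Finsupp.single m 1), Finsupp.single m 1, by simp [IsDist], hδ₁ m, rfl⟩
  rintro s ⟨P, hP, hPm, rfl⟩
  have hfP : IsDist (Finsupp.mapDomain (⇑f) P) := by
    unfold IsDist at hP ⊢
    rw [Finsupp.sum_mapDomain_index (fun _ => rfl) (fun _ _ _ => rfl)]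
    exact hP
  have hmem : unitMass (Finsupp.mapDomain (⇑f) P) ∈
      {s : ℝ≥0 | ∃ P : M₂ →₀ ℝ≥0, IsDist P ∧ pm₂ P = f m ∧ s = unitMass P} :=
    ⟨_, hfP, by rw [hf P hP, hPm], rfl⟩
  refine le_trans ?_ (le_csSup hb hmem)
  unfold unitMass
  rw [Finsupp.sum_mapDomain_index (by intro b; simp) (by intro b m₁ m₂; split <;> simp)]
  apply Finset.sum_le_sum
  intro a _
  by_cases h : IsUnit a
  · simp [h, h.map f]
  · simp [h]
end
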